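/- arXiv:2512.14007 — 3 statements merged into one kernel-verified Lean document; each statement's English description precedes it below -/
import Mathlib

section
/- Let (a,b) be a perplex parameter and suppose Δ = 0, where Δ := (a₁b₃ − a₃b₁)² − 4(a₁b₂ − a₂b₁)(a₂b₃ − a₃b₂). Then ℙ_{a,b} is isomorphic to the dual numbers ℝ[ε]/(ε²): there exists a real-linear equivalence φ : ℝ² → DualNumber ℝ such that φ(x * y) = φ(x)·φ(y) for all x, y ∈ ℝ². -/
open Filter Topology

noncomputable section

/-- The perplex product on `ℝ²` determined by the parameters `a = (a₁,a₂,a₃)`,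
`b = (b₁,b₂,b₃)`. -/
def pmul (a₁ a₂ a₃ b₁ b₂ b₃ : ℝ) (x y : ℝ × ℝ) : ℝ × ℝ :=
  (a₁ * x.1 * y.1 + a₂ * (x.1 * y.2 + x.2 * y.1) + a₃ * x.2 * y.2,
   b₁ * x.1 * y.1 + b₂ * (x.1 * y.2 + x.2 * y.1) + b₃ * x.2 * y.2)

/-- `(a,b)` is a perplex parameter: conditions (i)-(iv). -/
def IsPerplexParam (a₁ a₂ a₃ b₁ b₂ b₃ : ℝ) : Prop :=
  a₁ * a₃ - a₂ ^ 2 ≠ 0 ∧ a₁ * b₂ - a₂ * b₁ ≠ 0 ∧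
    a₂ * b₂ - a₃ * b₁ = 0 ∧ a₁ * a₃ - a₂ ^ 2 + a₂ * b₃ - a₃ * b₂ = 0


/-!
The vector `u = (b₂, -b₁) / (a₁b₂ - a₂b₁)` is a unit of `ℙ_{a,b}`. If `v` is independent of `u`
and `v * v = α u + β v`, then `n = 2v - βu` satisfies `n * n = (β² + 4α) u`. For `v = (1, 0)`
one has `β² + 4α = (a₁ + b₂)² - 4(a₁b₂ - a₂b₁)`, and `b₁² Δ = (a₁b₂ - a₂b₁)² (β² + 4α)`
(for `b₁ = 0` take `v = (0, 1)` instead). So `Δ = 0` makes `n` nilpotent, and `u ↦ 1`, `n ↦ ε`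
is the isomorphism.
-/

open DualNumber

noncomputable def DualNumber.basisOneEps (R : Type*) [CommSemiring R] :
    Module.Basis (Fin 2) R (DualNumber R) :=
  .ofEquivFun
    { toFun z := ![z.fst, z.snd]
      invFun f := TrivSqZeroExt.inl (f 0) + TrivSqZeroExt.inr (f 1)
      map_add' _ _ := by ext i; fin_cases i <;> simp
      map_smul' _ _ := by ext i; fin_cases i <;> simp
      left_inv z := by ext <;> simp
      right_inv f := by ext i; fin_cases i <;> simp }

@[simp]
theorem DualNumber.basisOneEps_zero (R : Type*) [CommSemiring R] : basisOneEps R 0 = 1 := by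
  ext <;> simp [basisOneEps]

@[simp]
theorem DualNumber.basisOneEps_one (R : Type*) [CommSemiring R] : basisOneEps R 1 = ε := by
  ext <;> simp [basisOneEps]

theorem exists_linearEquiv_dualNumber_of_basis {R V : Type*} [CommSemiring R] [AddCommMonoid V]
    [Module R V] (m : V →ₗ[R] V →ₗ[R] V) (b : Module.Basis (Fin 2) R V)
    (h00 : m (b 0) (b 0) = b 0) (h01 : m (b 0) (b 1) = b 1) (h10 : m (b 1) (b 0) = b 1)
    (h11 : m (b 1) (b 1) = 0) :
    ∃ φ : V ≃ₗ[R] DualNumber R, ∀ x y, φ (m x y) = φ x * φ y := by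
  let φ := b.equiv (basisOneEps R) (Equiv.refl _)
  refine ⟨φ, fun x y => LinearMap.congr_fun₂ (LinearMap.ext_basis b b fun i j => ?_ :
    m.compr₂ φ.toLinearMap = (LinearMap.mul R _).compl₁₂ φ.toLinearMap φ.toLinearMap) x y⟩
  fin_cases i <;> fin_cases j <;> simp [φ, h00, h01, h10, h11]

theorem linearIndependent_pair_of_det_ne_zero {R : Type*} [CommRing R] [NoZeroDivisors R]
    {x y : R × R} (h : x.1 * y.2 - x.2 * y.1 ≠ 0) : LinearIndependent R ![x, y] := by
  refine LinearIndependent.pair_iff.mpr fun s t hst => ?_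
  have h1 : s * x.1 + t * y.1 = 0 := by simpa using congrArg Prod.fst hst
  have h2 : s * x.2 + t * y.2 = 0 := by simpa using congrArg Prod.snd hst
  have hs : s * (x.1 * y.2 - x.2 * y.1) = 0 := by linear_combination y.2 * h1 - y.1 * h2
  have ht : t * (x.1 * y.2 - x.2 * y.1) = 0 := by linear_combination x.1 * h2 - x.2 * h1
  exact ⟨(mul_eq_zero.mp hs).resolve_right h, (mul_eq_zero.mp ht).resolve_right h⟩

theorem exists_linearEquiv_dualNumber_of_sq_eq {K V : Type*} [Field K] [NeZero (2 : K)]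
    [AddCommGroup V] [Module K V] (hV : Module.finrank K V = 2) (m : V →ₗ[K] V →ₗ[K] V)
    (hm : ∀ x y, m x y = m y x) {u v : V} (hu : ∀ x, m u x = x)
    (huv : LinearIndependent K ![u, v]) {α β : K} (hv : m v v = α • u + β • v)
    (hdisc : β ^ 2 + 4 * α = 0) :
    ∃ φ : V ≃ₗ[K] DualNumber K, ∀ x y, φ (m x y) = φ x * φ y := by
  set n := (2 : K) • v - β • u
  have hn : m n n = 0 := by
    simp only [n, map_sub, map_smul, LinearMap.sub_apply, LinearMap.smul_apply, hu, hm v u, hv]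
    linear_combination (norm := module) hdisc • u
  have hun : LinearIndependent K ![u, n] := by
    refine LinearIndependent.pair_iff.mpr fun s t hst => ?_
    obtain ⟨hs, ht₂⟩ :=
      LinearIndependent.pair_iff.mp huv (s - t * β) (t * 2) (by rw [← hst]; module)
    have ht : t = 0 := (mul_eq_zero.mp ht₂).resolve_right two_ne_zero
    exact ⟨by simpa [ht] using hs, ht⟩
  let b := basisOfLinearIndependentOfCardEqFinrank hun (by simp [hV])
  have hb : ∀ i, b i = ![u, n] i := by simp [b]
  refine exists_linearEquiv_dualNumber_of_basis m b ?_ ?_ ?_ ?_ <;> simp [hb, hu, hm n u, hn]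

def pmulBilin (a₁ a₂ a₃ b₁ b₂ b₃ : ℝ) : (ℝ × ℝ) →ₗ[ℝ] (ℝ × ℝ) →ₗ[ℝ] ℝ × ℝ :=
  LinearMap.mk₂ ℝ (pmul a₁ a₂ a₃ b₁ b₂ b₃)
    (fun _ _ _ => by ext <;> simp only [pmul, Prod.fst_add, Prod.snd_add] <;> ring)
    (fun _ _ _ => by ext <;> simp only [pmul, Prod.smul_fst, Prod.smul_snd, smul_eq_mul] <;> ring)
    (fun _ _ _ => by ext <;> simp only [pmul, Prod.fst_add, Prod.snd_add] <;> ring)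
    (fun _ _ _ => by ext <;> simp only [pmul, Prod.smul_fst, Prod.smul_snd, smul_eq_mul] <;> ring)

theorem pmul_comm (a₁ a₂ a₃ b₁ b₂ b₃ : ℝ) (x y : ℝ × ℝ) :
    pmul a₁ a₂ a₃ b₁ b₂ b₃ x y = pmul a₁ a₂ a₃ b₁ b₂ b₃ y x := by
  ext <;> simp only [pmul] <;> ring

def perplexUnit (a₁ a₂ b₁ b₂ : ℝ) : ℝ × ℝ :=
  (a₁ * b₂ - a₂ * b₁)⁻¹ • (b₂, -b₁)

namespace IsPerplexParam

variable {a₁ a₂ a₃ b₁ b₂ b₃ : ℝ}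

theorem sq_sub_mul_eq (hp : IsPerplexParam a₁ a₂ a₃ b₁ b₂ b₃) :
    b₂ ^ 2 - b₁ * b₃ = a₁ * b₂ - a₂ * b₁ := by
  obtain ⟨hd, -, h3, h4⟩ := hp
  refine sub_eq_zero.mp ((mul_eq_zero.mp ?_).resolve_left hd)
  linear_combination (a₁ * b₃ - a₂ * b₂) * h3 - (a₁ * b₂ - a₂ * b₁) * h4

theorem pmul_perplexUnit_left (hp : IsPerplexParam a₁ a₂ a₃ b₁ b₂ b₃) (x : ℝ × ℝ) :
    pmul a₁ a₂ a₃ b₁ b₂ b₃ (perplexUnit a₁ a₂ b₁ b₂) x = x := by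
  have hD := hp.2.1
  have h3 := hp.2.2.1
  have hA := hp.sq_sub_mul_eq
  have hinv : (a₁ * b₂ - a₂ * b₁)⁻¹ * (a₁ * b₂ - a₂ * b₁) = 1 := inv_mul_cancel₀ hD
  ext <;> simp only [pmul, perplexUnit, Prod.smul_mk, smul_eq_mul]
  · linear_combination x.1 * hinv + ((a₁ * b₂ - a₂ * b₁)⁻¹ * x.2) * h3
  · linear_combination x.2 * hinv + ((a₁ * b₂ - a₂ * b₁)⁻¹ * x.2) * hA

/-- `Δ` is the discriminant of the norm form `x ↦ det (y ↦ x * y)`; in the basis `u, (1, 0)` that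
discriminant is `(a₁ + b₂)² - 4(a₁b₂ - a₂b₁)`, and the change of basis has determinant
`b₁ / (a₁b₂ - a₂b₁)`. -/
theorem sq_mul_discriminant_eq (hp : IsPerplexParam a₁ a₂ a₃ b₁ b₂ b₃) :
    b₁ ^ 2 * ((a₁ * b₃ - a₃ * b₁) ^ 2 - 4 * (a₁ * b₂ - a₂ * b₁) * (a₂ * b₃ - a₃ * b₂)) =
      (a₁ * b₂ - a₂ * b₁) ^ 2 * ((a₁ + b₂) ^ 2 - 4 * (a₁ * b₂ - a₂ * b₁)) := by
  have h3 := hp.2.2.1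
  have hA := hp.sq_sub_mul_eq
  have hC : 2 * b₂ * (a₁ * b₂ - a₂ * b₁) - (a₁ * b₃ - a₃ * b₁) * b₁ =
      (a₁ + b₂) * (a₁ * b₂ - a₂ * b₁) := by
    linear_combination -b₁ * h3 + a₁ * hA
  linear_combination
    (2 * b₂ * (a₁ * b₂ - a₂ * b₁) - (a₁ * b₃ - a₃ * b₁) * b₁ + (a₁ + b₂) * (a₁ * b₂ - a₂ * b₁)) * hC
      - 4 * (a₁ * b₂ - a₂ * b₁) ^ 2 * hA

theorem exists_sq_eq_of_discriminant_eq_zero (hp : IsPerplexParam a₁ a₂ a₃ b₁ b₂ b₃)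
    (hΔ : (a₁ * b₃ - a₃ * b₁) ^ 2 - 4 * (a₁ * b₂ - a₂ * b₁) * (a₂ * b₃ - a₃ * b₂) = 0) :
    ∃ (v : ℝ × ℝ) (α β : ℝ), LinearIndependent ℝ ![perplexUnit a₁ a₂ b₁ b₂, v] ∧
      pmul a₁ a₂ a₃ b₁ b₂ b₃ v v = α • perplexUnit a₁ a₂ b₁ b₂ + β • v ∧ β ^ 2 + 4 * α = 0 := by
  have hD := hp.2.1
  have hinv : (a₁ * b₂ - a₂ * b₁)⁻¹ * (a₁ * b₂ - a₂ * b₁) = 1 := inv_mul_cancel₀ hD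
  rcases ne_or_eq b₁ 0 with hb₁ | rfl
  · refine ⟨(1, 0), -(a₁ * b₂ - a₂ * b₁), a₁ + b₂,
      linearIndependent_pair_of_det_ne_zero ?_, ?_, ?_⟩
    · simpa [perplexUnit] using ⟨hD, hb₁⟩
    · ext <;> simp only [pmul, perplexUnit, Prod.smul_mk, Prod.fst_add, Prod.snd_add, smul_eq_mul]
      · linear_combination b₂ * hinv
      · linear_combination -b₁ * hinv
    · have h := hp.sq_mul_discriminant_eq
      rw [hΔ, mul_zero, zero_eq_mul] at h
      linear_combination h.resolve_left (pow_ne_zero 2 hD)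
  · have h3 : a₂ * b₂ = 0 := by simpa using hp.2.2.1
    have hA : b₂ * (b₂ - a₁) = 0 := by linear_combination hp.sq_sub_mul_eq
    have hb₂ : b₂ ≠ 0 := by rintro rfl; simp at hD
    obtain rfl : a₂ = 0 := (mul_eq_zero.mp h3).resolve_right hb₂
    obtain rfl : b₂ = a₁ := sub_eq_zero.mp ((mul_eq_zero.mp hA).resolve_left hb₂)
    refine ⟨(0, 1), b₂ * a₃, b₃, linearIndependent_pair_of_det_ne_zero ?_, ?_, ?_⟩
    · simpa [perplexUnit] using hb₂
    · ext <;> simp only [pmul, perplexUnit, Prod.smul_mk, Prod.fst_add, Prod.snd_add, smul_eq_mul]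
      · linear_combination -a₃ * hinv
      · ring
    · refine (mul_eq_zero.mp (?_ : b₂ ^ 2 * (b₃ ^ 2 + 4 * (b₂ * a₃)) = 0)).resolve_left
        (pow_ne_zero 2 hb₂)
      linear_combination hΔ

end IsPerplexParam

/-- Classification, case `Δ = 0`: `ℙ_{a,b}` is isomorphic to the dual numbers
`ℝ[ε]/(ε²)`. -/
theorem perplex_iso_dual_of_discriminant_zero (a₁ a₂ a₃ b₁ b₂ b₃ : ℝ)
    (hp : IsPerplexParam a₁ a₂ a₃ b₁ b₂ b₃)
    (hΔ : (a₁ * b₃ - a₃ * b₁) ^ 2 -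
        4 * (a₁ * b₂ - a₂ * b₁) * (a₂ * b₃ - a₃ * b₂) = 0) :
    ∃ φ : (ℝ × ℝ) ≃ₗ[ℝ] DualNumber ℝ, ∀ x y : ℝ × ℝ, φ (pmul a₁ a₂ a₃ b₁ b₂ b₃ x y) = φ x * φ y := by
  obtain ⟨v, α, β, huv, hv, hdisc⟩ := hp.exists_sq_eq_of_discriminant_eq_zero hΔ
  exact exists_linearEquiv_dualNumber_of_sq_eq (by simp) (pmulBilin a₁ a₂ a₃ b₁ b₂ b₃)
    (pmul_comm a₁ a₂ a₃ b₁ b₂ b₃) hp.pmul_perplexUnit_left huv hv hdisc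
end
end

section
/- Let (a,b) be a perplex parameter and define the perplex norm N(x) := (a₁b₂ − a₂b₁)x₁² + (a₁b₃ − a₃b₁)x₁x₂ − (a₁a₃ − a₂²)x₂² for x = (x₁,x₂) ∈ ℝ². Then N(x * y) = N(x)·N(y) for all x, y ∈ ℝ², and x is invertible for * (i.e., there exists y with x * y = 𝟙) if and only if N(x) ≠ 0. -/
open Filter Topology

noncomputable section

/-- The multiplicative identity `𝟙` of the perplex algebra. -/
def pone (a₁ a₂ b₁ b₂ : ℝ) : ℝ × ℝ :=
  (1 / (a₁ * b₂ - a₂ * b₁)) • ((b₂, -b₁) : ℝ × ℝ)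

/-- The perplex norm `N`. -/
def pN (a₁ a₂ a₃ b₁ b₂ b₃ : ℝ) (x : ℝ × ℝ) : ℝ :=
  (a₁ * b₂ - a₂ * b₁) * x.1 ^ 2 + (a₁ * b₃ - a₃ * b₁) * x.1 * x.2 -
    (a₁ * a₃ - a₂ ^ 2) * x.2 ^ 2

/-!
Multiplication by `x` is a linear endomorphism `L x` of `ℝ²`, and condition (iv) says exactly that
`N x = det (L x)`. Conditions (iii) and (iv), together with the identity
`b₂² - b₁ b₃ = a₁ b₂ - a₂ b₁` that they imply once (i) holds, make `*` associative, so
`L (x * y) = L x ∘ L y` and `N` is multiplicative. With (ii), `𝟙` is a unit for `*`, so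
`L 𝟙 = id` and `N 𝟙 = 1`; hence `x * y = 𝟙` forces `N x ≠ 0`, while `N x ≠ 0` makes `L x`
bijective, so that `𝟙` lies in its image.
-/

variable {a₁ a₂ a₃ b₁ b₂ b₃ : ℝ}

theorem IsPerplexParam.b₂_sq_sub_b₁_mul_b₃ (hp : IsPerplexParam a₁ a₂ a₃ b₁ b₂ b₃) :
    b₂ ^ 2 - b₁ * b₃ = a₁ * b₂ - a₂ * b₁ := by
  obtain ⟨hD, -, h₃, h₄⟩ := hp
  have h : (b₂ ^ 2 - b₁ * b₃ - (a₁ * b₂ - a₂ * b₁)) * (a₁ * a₃ - a₂ ^ 2) = 0 := by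
    linear_combination (a₁ * (b₃ - a₂) - a₂ * (b₂ - a₁)) * h₃ + (a₂ * b₁ - a₁ * b₂) * h₄
  linear_combination (mul_eq_zero.mp h).resolve_right hD

/-- The associator is trilinear and alternating in its outer arguments, so it is determined by
its values on `(e₁, e₁, e₂)` and `(e₁, e₂, e₂)`; these vanish exactly under the three identities. -/
theorem pmul_assoc (h₃ : a₂ * b₂ - a₃ * b₁ = 0) (h₄ : a₁ * a₃ - a₂ ^ 2 + a₂ * b₃ - a₃ * b₂ = 0)
    (h₅ : b₂ ^ 2 - b₁ * b₃ = a₁ * b₂ - a₂ * b₁) (x y z : ℝ × ℝ) :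
    pmul a₁ a₂ a₃ b₁ b₂ b₃ (pmul a₁ a₂ a₃ b₁ b₂ b₃ x y) z =
      pmul a₁ a₂ a₃ b₁ b₂ b₃ x (pmul a₁ a₂ a₃ b₁ b₂ b₃ y z) := by
  obtain ⟨x₁, x₂⟩ := x
  obtain ⟨y₁, y₂⟩ := y
  obtain ⟨z₁, z₂⟩ := z
  simp only [pmul, Prod.mk.injEq]
  constructor
  · linear_combination (x₂ * y₁ * z₁ - x₁ * y₁ * z₂) * h₃ + (x₂ * y₂ * z₁ - x₁ * y₂ * z₂) * h₄
  · linear_combination (x₂ * y₁ * z₁ - x₁ * y₁ * z₂) * h₅ + (x₁ * y₂ * z₂ - x₂ * y₂ * z₁) * h₃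

theorem pone_pmul (hE : a₁ * b₂ - a₂ * b₁ ≠ 0) (h₃ : a₂ * b₂ - a₃ * b₁ = 0)
    (h₅ : b₂ ^ 2 - b₁ * b₃ = a₁ * b₂ - a₂ * b₁) (y : ℝ × ℝ) :
    pmul a₁ a₂ a₃ b₁ b₂ b₃ (pone a₁ a₂ b₁ b₂) y = y := by
  obtain ⟨y₁, y₂⟩ := y
  simp only [pmul, pone, Prod.smul_mk, smul_eq_mul, Prod.mk.injEq]
  constructor <;> field_simp [show a₁ * b₂ - b₁ * a₂ ≠ 0 by rwa [mul_comm b₁]]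
  · linear_combination y₂ * h₃
  · linear_combination y₂ * h₅

variable (a₁ a₂ a₃ b₁ b₂ b₃) in
def pmulLeft (x : ℝ × ℝ) : Module.End ℝ (ℝ × ℝ) where
  toFun := pmul a₁ a₂ a₃ b₁ b₂ b₃ x
  map_add' y z := by
    simp only [pmul, Prod.fst_add, Prod.snd_add, Prod.mk_add_mk, Prod.mk.injEq]
    constructor <;> ring
  map_smul' c y := by
    simp only [pmul, Prod.smul_fst, Prod.smul_snd, smul_eq_mul, RingHom.id_apply, Prod.smul_mk,
      Prod.mk.injEq]
    constructor <;> ring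

theorem pN_eq_det_pmulLeft (h₄ : a₁ * a₃ - a₂ ^ 2 + a₂ * b₃ - a₃ * b₂ = 0) (x : ℝ × ℝ) :
    pN a₁ a₂ a₃ b₁ b₂ b₃ x = LinearMap.det (pmulLeft a₁ a₂ a₃ b₁ b₂ b₃ x) := by
  rw [← LinearMap.det_toMatrix (Module.Basis.finTwoProd ℝ), Matrix.det_fin_two]
  simp only [pN, pmulLeft, pmul, LinearMap.toMatrix_apply, LinearMap.coe_mk, AddHom.coe_mk,
    Module.Basis.finTwoProd_zero, Module.Basis.finTwoProd_one, Module.Basis.coe_finTwoProd_repr,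
    Fin.isValue, Matrix.cons_val_zero, Matrix.cons_val_one, Matrix.cons_val_fin_one, mul_one,
    mul_zero, zero_add, add_zero]
  linear_combination -x.2 ^ 2 * h₄

theorem pmulLeft_pmul (h₃ : a₂ * b₂ - a₃ * b₁ = 0)
    (h₄ : a₁ * a₃ - a₂ ^ 2 + a₂ * b₃ - a₃ * b₂ = 0) (h₅ : b₂ ^ 2 - b₁ * b₃ = a₁ * b₂ - a₂ * b₁)
    (x y : ℝ × ℝ) :
    pmulLeft a₁ a₂ a₃ b₁ b₂ b₃ (pmul a₁ a₂ a₃ b₁ b₂ b₃ x y) =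
      pmulLeft a₁ a₂ a₃ b₁ b₂ b₃ x * pmulLeft a₁ a₂ a₃ b₁ b₂ b₃ y :=
  LinearMap.ext (pmul_assoc h₃ h₄ h₅ x y)

theorem pmulLeft_pone (hE : a₁ * b₂ - a₂ * b₁ ≠ 0) (h₃ : a₂ * b₂ - a₃ * b₁ = 0)
    (h₅ : b₂ ^ 2 - b₁ * b₃ = a₁ * b₂ - a₂ * b₁) :
    pmulLeft a₁ a₂ a₃ b₁ b₂ b₃ (pone a₁ a₂ b₁ b₂) = 1 :=
  LinearMap.ext (pone_pmul hE h₃ h₅)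

theorem pN_pmul (h₃ : a₂ * b₂ - a₃ * b₁ = 0)
    (h₄ : a₁ * a₃ - a₂ ^ 2 + a₂ * b₃ - a₃ * b₂ = 0) (h₅ : b₂ ^ 2 - b₁ * b₃ = a₁ * b₂ - a₂ * b₁)
    (x y : ℝ × ℝ) :
    pN a₁ a₂ a₃ b₁ b₂ b₃ (pmul a₁ a₂ a₃ b₁ b₂ b₃ x y) =
      pN a₁ a₂ a₃ b₁ b₂ b₃ x * pN a₁ a₂ a₃ b₁ b₂ b₃ y := by
  simp only [pN_eq_det_pmulLeft h₄, pmulLeft_pmul h₃ h₄ h₅, map_mul]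

theorem pN_pone (hE : a₁ * b₂ - a₂ * b₁ ≠ 0) (h₃ : a₂ * b₂ - a₃ * b₁ = 0)
    (h₄ : a₁ * a₃ - a₂ ^ 2 + a₂ * b₃ - a₃ * b₂ = 0) (h₅ : b₂ ^ 2 - b₁ * b₃ = a₁ * b₂ - a₂ * b₁) :
    pN a₁ a₂ a₃ b₁ b₂ b₃ (pone a₁ a₂ b₁ b₂) = 1 := by
  rw [pN_eq_det_pmulLeft h₄, pmulLeft_pone hE h₃ h₅, map_one]

theorem pmulLeft_bijective_iff (h₄ : a₁ * a₃ - a₂ ^ 2 + a₂ * b₃ - a₃ * b₂ = 0) (x : ℝ × ℝ) :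
    Function.Bijective (pmulLeft a₁ a₂ a₃ b₁ b₂ b₃ x) ↔ pN a₁ a₂ a₃ b₁ b₂ b₃ x ≠ 0 := by
  rw [← Module.End.isUnit_iff, LinearMap.isUnit_iff_isUnit_det, ← pN_eq_det_pmulLeft h₄,
    isUnit_iff_ne_zero]

/-- The perplex norm is multiplicative, and `x` is invertible iff `N(x) ≠ 0`. -/
theorem pN_mul_and_invertible_iff (a₁ a₂ a₃ b₁ b₂ b₃ : ℝ)
    (hp : IsPerplexParam a₁ a₂ a₃ b₁ b₂ b₃) :
    (∀ x y : ℝ × ℝ, pN a₁ a₂ a₃ b₁ b₂ b₃ (pmul a₁ a₂ a₃ b₁ b₂ b₃ x y) = pN a₁ a₂ a₃ b₁ b₂ b₃ x * pN a₁ a₂ a₃ b₁ b₂ b₃ y) ∧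
      ∀ x : ℝ × ℝ, (∃ y : ℝ × ℝ, pmul a₁ a₂ a₃ b₁ b₂ b₃ x y = pone a₁ a₂ b₁ b₂) ↔ pN a₁ a₂ a₃ b₁ b₂ b₃ x ≠ 0 := by
  have h₅ := hp.b₂_sq_sub_b₁_mul_b₃
  obtain ⟨-, hE, h₃, h₄⟩ := hp
  refine ⟨pN_pmul h₃ h₄ h₅, fun x => ⟨?_, fun hx => ?_⟩⟩
  · rintro ⟨y, hy⟩ hx
    have h := pN_pmul h₃ h₄ h₅ x y
    rw [hy, pN_pone hE h₃ h₄ h₅, hx, zero_mul] at h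
    exact one_ne_zero h
  · exact ((pmulLeft_bijective_iff h₄ x).mpr hx).surjective (pone a₁ a₂ b₁ b₂)
end
end

section
/- Let (a,b) be a perplex parameter, let θ ∈ (0,1), and let N ≥ 2 be a natural number with N > 1/(1−θ). Assume that for k = N−1 and k = N, the k-fold *-power t^k is nonzero for every t ∈ ℝ² with ‖t‖_m = 1. Then the quotient Q_N(t) := ‖t^N‖_m^θ / ‖t^{N−1}‖_m tends to +∞ as t → 0 with t ≠ 0, where ‖x‖_m := max{|x₁|,|x₂|}. -/
open Filter Topology

noncomputable section

/-- `n`-fold `*`-power of `x`, with `x ^ 0 := 𝟙`. -/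
def ppow (a₁ a₂ a₃ b₁ b₂ b₃ : ℝ) (x : ℝ × ℝ) : ℕ → ℝ × ℝ
  | 0 => pone a₁ a₂ b₁ b₂
  | n + 1 => pmul a₁ a₂ a₃ b₁ b₂ b₃ x (ppow a₁ a₂ a₃ b₁ b₂ b₃ x n)

/-- The sup norm `‖·‖ₘ` on `ℝ²`. -/
def mnorm (x : ℝ × ℝ) : ℝ := max |x.1| |x.2|

lemma mnorm_eq_norm (x : ℝ × ℝ) : mnorm x = ‖x‖ := by
  rw [Prod.norm_def]; simp [mnorm, Real.norm_eq_abs]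

lemma pmul_smul_left (a₁ a₂ a₃ b₁ b₂ b₃ c : ℝ) (x y : ℝ × ℝ) :
    pmul a₁ a₂ a₃ b₁ b₂ b₃ (c • x) y = c • pmul a₁ a₂ a₃ b₁ b₂ b₃ x y := by
  refine Prod.ext ?_ ?_ <;> simp [pmul] <;> ring

lemma pmul_smul_right (a₁ a₂ a₃ b₁ b₂ b₃ c : ℝ) (x y : ℝ × ℝ) :
    pmul a₁ a₂ a₃ b₁ b₂ b₃ x (c • y) = c • pmul a₁ a₂ a₃ b₁ b₂ b₃ x y := by
  refine Prod.ext ?_ ?_ <;> simp [pmul] <;> ring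

lemma ppow_smul (a₁ a₂ a₃ b₁ b₂ b₃ c : ℝ) (x : ℝ × ℝ) (n : ℕ) (hn : n ≠ 0) :
    ppow a₁ a₂ a₃ b₁ b₂ b₃ (c • x) n = c ^ n • ppow a₁ a₂ a₃ b₁ b₂ b₃ x n := by
  induction n with
  | zero => exact absurd rfl hn
  | succ k ih =>
    rcases Nat.eq_zero_or_pos k with hk | hk
    · subst hk; simp [ppow, pmul_smul_left]
    · simp only [ppow]
      rw [ih (by omega), pmul_smul_right, pmul_smul_left, smul_smul, pow_succ, mul_comm]

lemma continuous_ppow (a₁ a₂ a₃ b₁ b₂ b₃ : ℝ) (k : ℕ) :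
    Continuous (fun t : ℝ × ℝ => ppow a₁ a₂ a₃ b₁ b₂ b₃ t k) := by
  induction k with
  | zero => exact continuous_const
  | succ n ih => simp only [ppow, pmul]; fun_prop

lemma mnorm_nonneg (x : ℝ × ℝ) : 0 ≤ mnorm x := by rw [mnorm_eq_norm]; exact norm_nonneg x

lemma mnorm_smul (c : ℝ) (x : ℝ × ℝ) : mnorm (c • x) = |c| * mnorm x := by
  simp [mnorm_eq_norm, norm_smul, Real.norm_eq_abs]

/-- Lemma 1.8: if the powers `t^(N−1)` and `t^N` do not vanish on the unit
sup-norm sphere and `N > 1/(1−θ)`, then `Q_N(t) = ‖t^N‖ₘ^θ / ‖t^(N−1)‖ₘ → ∞`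
as `t → 0`, `t ≠ 0`. -/
theorem QN_tendsto_atTop (a₁ a₂ a₃ b₁ b₂ b₃ : ℝ)
    (hp : IsPerplexParam a₁ a₂ a₃ b₁ b₂ b₃)
    (θ : ℝ) (hθ : θ ∈ Set.Ioo (0 : ℝ) 1)
    (N : ℕ) (hN : 2 ≤ N) (hNθ : 1 / (1 - θ) < (N : ℝ))
    (hreg : ∀ k ∈ ({N - 1, N} : Set ℕ), ∀ t : ℝ × ℝ, mnorm t = 1 →
      ppow a₁ a₂ a₃ b₁ b₂ b₃ t k ≠ 0) :
    Tendsto (fun t : ℝ × ℝ => mnorm (ppow a₁ a₂ a₃ b₁ b₂ b₃ t N) ^ θ / mnorm (ppow a₁ a₂ a₃ b₁ b₂ b₃ t (N - 1)))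
      (nhdsWithin 0 {(0 : ℝ × ℝ)}ᶜ) atTop := by
  obtain ⟨hθ0, hθ1⟩ := hθ
  have hθ1' : (0:ℝ) < 1 - θ := by linarith
  set f : ℝ × ℝ → ℕ → ℝ × ℝ := ppow a₁ a₂ a₃ b₁ b₂ b₃ with hf
  have hsph : ∀ u : ℝ × ℝ, u ∈ Metric.sphere (0 : ℝ × ℝ) 1 ↔ mnorm u = 1 := by
    intro u; rw [mem_sphere_zero_iff_norm, mnorm_eq_norm]
  have hne : (Metric.sphere (0 : ℝ × ℝ) 1).Nonempty := by
    refine ⟨((1 : ℝ), (0 : ℝ)), ?_⟩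
    rw [mem_sphere_zero_iff_norm, Prod.norm_def]; simp
  have hcN : ∀ k : ℕ, Continuous fun u : ℝ × ℝ => mnorm (f u k) := by
    intro k
    simp only [mnorm_eq_norm]
    exact (continuous_ppow a₁ a₂ a₃ b₁ b₂ b₃ k).norm
  obtain ⟨u₁, hu₁, hmin'⟩ :=
    (isCompact_sphere (0 : ℝ × ℝ) 1).exists_isMinOn hne (hcN N).continuousOn
  obtain ⟨u₂, hu₂, hmax'⟩ :=
    (isCompact_sphere (0 : ℝ × ℝ) 1).exists_isMaxOn hne (hcN (N - 1)).continuousOn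
  have hmin : ∀ u ∈ Metric.sphere (0 : ℝ × ℝ) 1, mnorm (f u₁ N) ≤ mnorm (f u N) :=
    fun u hu => hmin' hu
  have hmax : ∀ u ∈ Metric.sphere (0 : ℝ × ℝ) 1, mnorm (f u (N - 1)) ≤ mnorm (f u₂ (N - 1)) :=
    fun u hu => hmax' hu
  have hA : 0 < mnorm (f u₁ N) := by
    rw [mnorm_eq_norm]
    exact norm_pos_iff.2 (hreg N (by simp) u₁ ((hsph u₁).1 hu₁))
  have hB : 0 < mnorm (f u₂ (N - 1)) := by
    rw [mnorm_eq_norm]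
    exact norm_pos_iff.2 (hreg (N - 1) (by simp) u₂ ((hsph u₂).1 hu₂))
  set A := mnorm (f u₁ N) with hAdef
  set B := mnorm (f u₂ (N - 1)) with hBdef
  set K := A ^ θ / B with hK
  have hKpos : 0 < K := div_pos (Real.rpow_pos_of_pos hA θ) hB
  set e : ℝ := (N : ℝ) * θ - ((N : ℝ) - 1) with he
  have hNR : (1 : ℝ) ≤ (N : ℝ) := by exact_mod_cast Nat.one_le_of_lt hN
  have hepos : 0 < -e := by
    rw [div_lt_iff₀ hθ1'] at hNθ
    simp only [he]; nlinarith
  have hcast : ((N - 1 : ℕ) : ℝ) = (N : ℝ) - 1 := by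
    rw [Nat.cast_sub (by omega)]; norm_num
  -- pointwise lower bound
  have key : ∀ t : ℝ × ℝ, t ≠ 0 →
      K * ‖t‖ ^ e ≤ mnorm (f t N) ^ θ / mnorm (f t (N - 1)) := by
    intro t ht
    have hr : 0 < ‖t‖ := norm_pos_iff.2 ht
    set r := ‖t‖ with hrdef
    set u := r⁻¹ • t with hu
    have hur : mnorm u = 1 := by
      rw [mnorm_eq_norm, hu, norm_smul, Real.norm_eq_abs, abs_of_pos (inv_pos.2 hr),
        inv_mul_cancel₀ hr.ne']
    have htu : t = r • u := by
      rw [hu, smul_smul, mul_inv_cancel₀ hr.ne', one_smul]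
    have husph : u ∈ Metric.sphere (0 : ℝ × ℝ) 1 := (hsph u).2 hur
    have hXN : mnorm (f t N) = r ^ N * mnorm (f u N) := by
      rw [htu, hf]
      rw [ppow_smul a₁ a₂ a₃ b₁ b₂ b₃ r u N (by omega), mnorm_smul, abs_pow,
        abs_of_pos hr]
    have hXN1 : mnorm (f t (N - 1)) = r ^ (N - 1) * mnorm (f u (N - 1)) := by
      rw [htu, hf]
      rw [ppow_smul a₁ a₂ a₃ b₁ b₂ b₃ r u (N - 1) (by omega), mnorm_smul, abs_pow,
        abs_of_pos hr]
    have hAu : A ≤ mnorm (f u N) := hmin u husph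
    have hBu : mnorm (f u (N - 1)) ≤ B := hmax u husph
    have hBu0 : 0 < mnorm (f u (N - 1)) := by
      rw [mnorm_eq_norm]
      exact norm_pos_iff.2 (hreg (N - 1) (by simp) u hur)
    rw [hXN, hXN1]
    have hnum : (r ^ N * mnorm (f u N)) ^ θ = r ^ ((N : ℝ) * θ) * mnorm (f u N) ^ θ := by
      rw [Real.mul_rpow (by positivity) (mnorm_nonneg _), ← Real.rpow_natCast r N,
        ← Real.rpow_mul hr.le]
    rw [hnum]
    have hstep : r ^ ((N : ℝ) * θ) * A ^ θ / (r ^ (N - 1) * B) ≤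
        r ^ ((N : ℝ) * θ) * mnorm (f u N) ^ θ / (r ^ (N - 1) * mnorm (f u (N - 1))) := by
      apply div_le_div₀
        (mul_nonneg (Real.rpow_nonneg hr.le _) (Real.rpow_nonneg (mnorm_nonneg _) _))
      · exact mul_le_mul_of_nonneg_left (Real.rpow_le_rpow hA.le hAu hθ0.le)
          (Real.rpow_nonneg hr.le _)
      · exact mul_pos (pow_pos hr _) hBu0
      · exact mul_le_mul_of_nonneg_left hBu (pow_nonneg hr.le _)
    refine le_trans (le_of_eq ?_) hstep
    have hpow : (r : ℝ) ^ (N - 1 : ℕ) = r ^ ((N : ℝ) - 1) := by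
      rw [← hcast, Real.rpow_natCast]
    rw [hpow, hK, he, Real.rpow_sub hr]
    have h1 : r ^ ((N:ℝ) - 1) ≠ 0 := (Real.rpow_pos_of_pos hr _).ne'
    field_simp
  -- the comparison function tends to atTop
  have h0 : Tendsto (fun t : ℝ × ℝ => ‖t‖) (nhdsWithin 0 {(0 : ℝ × ℝ)}ᶜ)
      (nhdsWithin 0 (Set.Ioi 0)) := by
    rw [tendsto_nhdsWithin_iff]
    constructor
    · have : Tendsto (fun t : ℝ × ℝ => ‖t‖) (nhds 0) (nhds ‖(0 : ℝ × ℝ)‖) :=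
        continuous_norm.tendsto (0 : ℝ × ℝ)
      rw [norm_zero] at this
      exact this.mono_left nhdsWithin_le_nhds
    · filter_upwards [self_mem_nhdsWithin] with t ht
      exact norm_pos_iff.2 ht
  have h1 : Tendsto (fun r : ℝ => r ^ e) (nhdsWithin 0 (Set.Ioi 0)) atTop := by
    have := (tendsto_rpow_atTop hepos).comp tendsto_inv_nhdsGT_zero
    refine this.congr' ?_
    filter_upwards [self_mem_nhdsWithin] with r hr
    simp only [Function.comp]
    rw [Real.inv_rpow (le_of_lt hr), Real.rpow_neg (le_of_lt hr), inv_inv]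
  have h2 : Tendsto (fun t : ℝ × ℝ => K * ‖t‖ ^ e) (nhdsWithin 0 {(0 : ℝ × ℝ)}ᶜ) atTop :=
    (h1.comp h0).const_mul_atTop hKpos
  refine tendsto_atTop_mono' _ ?_ h2
  filter_upwards [self_mem_nhdsWithin] with t ht
  exact key t ht
end
end
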